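/- Let p be a prime, let t ≥ r(p) =: r, and let f₂, f₃ ∈ {0,1} satisfy w₂(pᵗ) ≤ f₂ and w₃(pᵗ) ≤ f₃. Then: (i) if p^{t−r+2} ∤ c and p^{t−r+2} ∤ d, and E_{f₂,f₃}(c,d;pᵗ) ≠ 0, then there is an integer s ≥ 0 with gcd(c, pᵗ) = p^s = gcd(d, pᵗ), and in this case E_{f₂,f₃}(c,d;pᵗ) = p^s · E_{f₂,f₃}(c/p^s, d/p^s; p^{t−s}); (ii) if p^{t−r+2} ∣ c or p^{t−r+2} ∣ d, and E_{f₂,f₃}(c,d;pᵗ) ≠ 0, then p^{t−r+1} ∣ gcd(c, d), and in this case E_{f₂,f₃}(c,d;pᵗ) = p^{t−r+1} · E_{f₂,f₃}(c/p^{t−r+1}, d/p^{t−r+1}; p^{r−1}). -/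

import Mathlib

open scoped BigOperators

/-- `E(c,d;q) = Σ_{z mod q, gcd(z,q)=1} e((cz³ − dz²)/q)`, where `e(x) = exp(2πix)`. -/
noncomputable def expE (c d : ℤ) (q : ℕ) : ℂ :=
  ∑ z ∈ (Finset.range q).filter fun z => Nat.gcd z q = 1,
    Complex.exp (2 * Real.pi * Complex.I *
      (((c : ℂ) * (z : ℂ) ^ 3 - (d : ℂ) * (z : ℂ) ^ 2) / (q : ℂ)))

/-- `E_{f₂,f₃}(c,d;q) = E(2^{f₂} c, 3^{f₃} d; q)`. -/
noncomputable def expEff (f₂ f₃ : ℕ) (c d : ℤ) (q : ℕ) : ℂ :=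
  expE (2 ^ f₂ * c) (3 ^ f₃ * d) q

/-- `w₂(q) = 1` if `4 ∣ q`, else `0`. -/
def w2 (q : ℕ) : ℕ := if 4 ∣ q then 1 else 0

/-- `w₃(q) = 1` if `9 ∣ q`, else `0`. -/
def w3 (q : ℕ) : ℕ := if 9 ∣ q then 1 else 0

/-- `r(2) = 6`, `r(3) = 5`, `r(p) = 2` for `p > 3`. -/
def rfun (p : ℕ) : ℕ := if p = 2 then 6 else if p = 3 then 5 else 2

/-!
Two facts drive the proof. *Scaling*: reduction `(ℤ/p^t)ˣ → (ℤ/p^(t-s))ˣ` is surjective with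
fibres of size `p^s`, so `E(p^s a, p^s b; p^t) = p^s E(a, b; p^(t-s))` for `s < t`.
*Vanishing*: if `ε² = 0` in `ℤ/q`, the substitution `z ↦ (1 + ε n) z` multiplies the summand at
`z` by the additive character `n ↦ e(n ε z² (3 a z - 2 b) / q)`; averaging over `n` shows
`E(a, b; q) = 0` unless `ε (3 a z - 2 b) = 0` for some unit `z`.
Taking `ε = p^(t-j)`, `E_{f₂,f₃}(c, d; p^t)` vanishes when exactly one of `c`, `d` is divisible
by `p` and `t ≥ r(p)`: for `p = 2` (resp. `3`) the factor `2^{f₂} = 2` (resp. `3^{f₃} = 3`) makes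
`3 a z - 2 b` divisible by exactly `p`, so `j = 2` works. Dividing out common powers of `p` by
scaling and applying this at each level, a non-zero sum forces `p^i ∣ c ↔ p^i ∣ d` for all
`i ≤ t - r(p) + 1`, and both cases follow.
-/

open Finset

theorem MonoidHom.card_nsmul_sum_comp_of_surjective {G H M : Type*} [Group G] [Group H]
    [Fintype G] [Fintype H] [AddCommMonoid M] (φ : G →* H) (hφ : Function.Surjective φ)
    (g : H → M) :
    Fintype.card H • ∑ x, g (φ x) = Fintype.card G • ∑ y, g y := by
  classical
  have hfib (y : H) : #{x | φ x = y} = #{x | φ x = 1} :=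
    MonoidHom.card_fiber_eq_of_mem_range φ (hφ y) ⟨1, map_one φ⟩
  have hsum : ∑ x, g (φ x) = #{x | φ x = 1} • ∑ y, g y := by
    rw [← sum_fiberwise' univ φ g, smul_sum]
    simp only [sum_const, hfib]
  have hcard : Fintype.card G = Fintype.card H * #{x | φ x = 1} := by
    rw [← card_univ, card_eq_sum_card_fiberwise (f := φ) (t := univ) fun _ _ ↦ mem_univ _]
    simp [hfib]
  rw [hsum, hcard, smul_smul, mul_comm]

theorem AddChar.sum_units_cubic_eq_zero {R : Type*} [CommRing R] [Fintype R] [DecidableEq R]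
    {ψ : AddChar R ℂ} (hψ : ψ.IsPrimitive) {a b ε : R} (hε : ε ^ 2 = 0)
    (h : ∀ u : Rˣ, ε * (3 * a * u - 2 * b) ≠ 0) :
    ∑ u : Rˣ, ψ (a * u ^ 3 - b * u ^ 2) = 0 := by
  have hunit (n : R) : IsUnit (1 + ε * n) :=
    IsNilpotent.isUnit_one_add ⟨2, by rw [mul_pow, hε, zero_mul]⟩
  have hshift (n : R) (u : Rˣ) :
      ψ (a * ↑((hunit n).unit * u) ^ 3 - b * ↑((hunit n).unit * u) ^ 2) =
        ψ (a * u ^ 3 - b * u ^ 2) * ψ (n * (ε * (3 * a * u - 2 * b) * u ^ 2)) := by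
    rw [← AddChar.map_add_eq_mul, Units.val_mul, IsUnit.unit_spec]
    congr 1
    linear_combination (a * u ^ 3 * (3 * n ^ 2 + ε * n ^ 3) - b * u ^ 2 * n ^ 2) * hε
  have hinv (n : R) : ∑ u : Rˣ, ψ (a * ↑((hunit n).unit * u) ^ 3 - b * ↑((hunit n).unit * u) ^ 2)
      = ∑ u : Rˣ, ψ (a * u ^ 3 - b * u ^ 2) :=
    Equiv.sum_comp (Equiv.mulLeft (hunit n).unit) fun u : Rˣ ↦ ψ (a * u ^ 3 - b * u ^ 2)
  have hcard : (Fintype.card R : ℂ) * ∑ u : Rˣ, ψ (a * u ^ 3 - b * u ^ 2) = 0 := calc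
    _ = ∑ n : R, ∑ u : Rˣ,
          ψ (a * ↑((hunit n).unit * u) ^ 3 - b * ↑((hunit n).unit * u) ^ 2) := by
      simp only [hinv, sum_const, card_univ, nsmul_eq_mul]
    _ = ∑ u : Rˣ, ψ (a * u ^ 3 - b * u ^ 2) *
          ∑ n : R, ψ (n * (ε * (3 * a * u - 2 * b) * u ^ 2)) := by
      rw [sum_comm]
      simp only [hshift, mul_sum]
    _ = 0 := sum_eq_zero fun u _ ↦ by
      rw [AddChar.sum_mulShift _ hψ, if_neg, Nat.cast_zero, mul_zero]
      rw [← Units.val_pow_eq_pow_val, Units.mul_left_eq_zero]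
      exact h u
  exact (mul_eq_zero.1 hcard).resolve_left (Nat.cast_ne_zero.2 Fintype.card_ne_zero)

theorem ZMod.stdAddChar_natCast_mul {k m : ℕ} [NeZero k] [NeZero m] (y : ZMod (k * m)) :
    stdAddChar ((k : ZMod (k * m)) * y) = stdAddChar (castHom (dvd_mul_left m k) (ZMod m) y) := by
  obtain ⟨Y, rfl⟩ := ZMod.intCast_surjective y
  rw [map_intCast, ← Int.cast_natCast, ← Int.cast_mul, stdAddChar_coe, stdAddChar_coe]
  congr 1
  have : (k : ℂ) ≠ 0 := Nat.cast_ne_zero.2 (NeZero.ne k)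
  push_cast
  field_simp

theorem expE_eq_sum_units (a b : ℤ) (q : ℕ) [NeZero q] :
    expE a b q = ∑ u : (ZMod q)ˣ,
      ZMod.stdAddChar ((a : ZMod q) * (u : ZMod q) ^ 3 - (b : ZMod q) * (u : ZMod q) ^ 2) := by
  refine sum_bij' (fun z hz ↦ ZMod.unitOfCoprime z (mem_filter.1 hz).2)
    (fun u _ ↦ (u : ZMod q).val) (fun _ _ ↦ mem_univ _) (fun u _ ↦ ?_) (fun z hz ↦ ?_)
    (fun u _ ↦ Units.ext (ZMod.natCast_zmod_val _)) (fun z hz ↦ ?_)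
  · exact mem_filter.2 ⟨mem_range.2 (ZMod.val_lt _), ZMod.val_coe_unit_coprime u⟩
  · exact ZMod.val_natCast_of_lt (mem_range.1 (mem_filter.1 hz).1)
  · have hcast : (((a * z ^ 3 - b * z ^ 2 : ℤ)) : ZMod q) =
        (a : ZMod q) * (z : ZMod q) ^ 3 - (b : ZMod q) * (z : ZMod q) ^ 2 := by
      push_cast
      ring
    rw [ZMod.coe_unitOfCoprime, ← hcast, ZMod.stdAddChar_coe]
    push_cast
    ring_nf

theorem totient_mul_expE_mul_mul (k m : ℕ) [NeZero k] [NeZero m] (a b : ℤ) :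
    (m.totient : ℂ) * expE (k * a) (k * b) (k * m) = (k * m).totient * expE a b m := by
  have h := (ZMod.unitsMap (dvd_mul_left m k)).card_nsmul_sum_comp_of_surjective
    (ZMod.unitsMap_surjective _)
    fun v ↦ ZMod.stdAddChar ((a : ZMod m) * (v : ZMod m) ^ 3 - (b : ZMod m) * (v : ZMod m) ^ 2)
  simp only [ZMod.card_units_eq_totient, nsmul_eq_mul] at h
  rw [expE_eq_sum_units, expE_eq_sum_units, ← h]
  congr 1
  refine sum_congr rfl fun u _ ↦ ?_
  have hfactor : ((k * a : ℤ) : ZMod (k * m)) * (u : ZMod (k * m)) ^ 3 -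
      ((k * b : ℤ) : ZMod (k * m)) * (u : ZMod (k * m)) ^ 2 =
        (k : ZMod (k * m)) * ((a : ZMod (k * m)) * u ^ 3 - (b : ZMod (k * m)) * u ^ 2) := by
    push_cast
    ring
  rw [hfactor, ZMod.stdAddChar_natCast_mul]
  simp only [map_sub, map_mul, map_pow, map_intCast]
  rfl

theorem expE_pow_mul_pow_mul {p : ℕ} (hp : p.Prime) {s t : ℕ} (hst : s < t) (a b : ℤ) :
    expE ((p : ℤ) ^ s * a) ((p : ℤ) ^ s * b) (p ^ t) = (p : ℂ) ^ s * expE a b (p ^ (t - s)) := by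
  have : NeZero p := ⟨hp.ne_zero⟩
  have h := totient_mul_expE_mul_mul (p ^ s) (p ^ (t - s)) a b
  rw [← pow_add, Nat.add_sub_cancel' hst.le, Nat.totient_prime_pow hp (by omega),
    Nat.totient_prime_pow hp (by omega), show t - 1 = s + (t - s - 1) by omega, pow_add] at h
  push_cast at h
  have hφ : (p : ℂ) ^ (t - s - 1) * ((p - 1 : ℕ) : ℂ) ≠ 0 :=
    mul_ne_zero (pow_ne_zero _ (Nat.cast_ne_zero.2 hp.ne_zero))
      (Nat.cast_ne_zero.2 (Nat.sub_ne_zero_of_lt hp.one_lt))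
  exact mul_left_cancel₀ hφ (by linear_combination h)

theorem expE_prime_pow_eq_zero {p : ℕ} (hp : p.Prime) {a b : ℤ} {j t : ℕ} (hj : 0 < j)
    (hjt : 2 * j ≤ t) (h : ∀ V : ℤ, ¬ (p : ℤ) ∣ V → ¬ (p : ℤ) ^ j ∣ 3 * a * V - 2 * b) :
    expE a b (p ^ t) = 0 := by
  have : NeZero (p ^ t) := ⟨pow_ne_zero _ hp.ne_zero⟩
  have hpt : (p : ℤ) ^ t = (p : ℤ) ^ (t - j) * (p : ℤ) ^ j := by
    rw [← pow_add, Nat.sub_add_cancel (by omega)]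
  rw [expE_eq_sum_units]
  refine AddChar.sum_units_cubic_eq_zero (ZMod.isPrimitive_stdAddChar _)
    (ε := ((p : ℤ) ^ (t - j) : ℤ)) ?_ fun u hu ↦ ?_
  · rw [← Int.cast_pow, ZMod.intCast_zmod_eq_zero_iff_dvd, ← pow_mul, Nat.cast_pow]
    exact pow_dvd_pow _ (by omega)
  · set V : ℤ := ((u : ZMod (p ^ t)).val : ℤ)
    have hV : ((V : ℤ) : ZMod (p ^ t)) = u := by simp [V]
    have hVp : ¬ (p : ℤ) ∣ V := by
      rw [Int.natCast_dvd_natCast, ← hp.coprime_iff_not_dvd, Nat.coprime_comm]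
      exact (ZMod.val_coe_unit_coprime u).coprime_dvd_right (dvd_pow_self p (by omega))
    refine h V hVp ?_
    rw [← mul_dvd_mul_iff_left (pow_ne_zero (t - j) (Int.natCast_ne_zero.2 hp.ne_zero)), ← hpt]
    rw [← hV] at hu
    exact_mod_cast (ZMod.intCast_zmod_eq_zero_iff_dvd _ _).1 (by push_cast at hu ⊢; exact hu)

theorem Prime.not_dvd_mul_mul_sub_mul {R : Type*} [CommRing R] {π α β c d V : R} (hπ : Prime π)
    (hα : ¬ π ∣ α) (hβ : ¬ π ∣ β) (hV : ¬ π ∣ V) (hcd : ¬ (π ∣ c ↔ π ∣ d)) :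
    ¬ π ∣ α * c * V - β * d := by
  intro h
  refine hcd ⟨fun hc ↦ ?_, fun hd ↦ ?_⟩
  · have := (dvd_sub_right (dvd_mul_of_dvd_left (dvd_mul_of_dvd_right hc α) V)).1 h
    exact (hπ.dvd_mul.1 this).resolve_left hβ
  · have := (dvd_sub_left (dvd_mul_of_dvd_right hd β)).1 h
    rcases hπ.dvd_mul.1 this with h' | h'
    · exact ((hπ.dvd_mul.1 h').resolve_left hα)
    · exact absurd h' hV

theorem two_le_rfun (p : ℕ) : 2 ≤ rfun p := by
  unfold rfun
  split_ifs <;> norm_num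

theorem dvd_iff_dvd_of_expEff_ne_zero {p : ℕ} (hp : p.Prime) {t f₂ f₃ : ℕ} (ht : rfun p ≤ t)
    (h₂ : p = 2 → f₂ = 1) (h₃ : p = 3 → f₃ = 1) {c d : ℤ}
    (hE : expEff f₂ f₃ c d (p ^ t) ≠ 0) : (p : ℤ) ∣ c ↔ (p : ℤ) ∣ d := by
  have hpZ : Prime (p : ℤ) := Nat.prime_iff_prime_int.1 hp
  have heq {q : ℕ} (hq : q.Prime) (h : (p : ℤ) ∣ q) : p = q :=
    (Nat.prime_dvd_prime_iff_eq hp hq).1 (Int.natCast_dvd_natCast.1 h)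
  by_contra hcd
  -- `p ^ i` is the exact power of `p` dividing the coefficients `3 * 2 ^ f₂` and `2 * 3 ^ f₃`;
  -- `2 (i + 1) ≤ r(p)` is what makes the vanishing criterion applicable
  obtain ⟨i, α, β, hit, hα, hβ, hfac⟩ : ∃ (i : ℕ) (α β : ℤ), 2 * (i + 1) ≤ t ∧
      ¬ (p : ℤ) ∣ α ∧ ¬ (p : ℤ) ∣ β ∧ ∀ V : ℤ,
        3 * (2 ^ f₂ * c) * V - 2 * (3 ^ f₃ * d) = (p : ℤ) ^ i * (α * c * V - β * d) := by
    by_cases hp2 : p = 2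
    · subst hp2
      obtain rfl := h₂ rfl
      refine ⟨1, 3, 3 ^ f₃, by simp [rfun] at ht; omega, by decide,
        fun h ↦ absurd (Int.prime_two.dvd_of_dvd_pow h) (by decide), fun V ↦ by ring⟩
    by_cases hp3 : p = 3
    · subst hp3
      obtain rfl := h₃ rfl
      refine ⟨1, 2 ^ f₂, 2, by simp [rfun] at ht; omega,
        fun h ↦ absurd (Int.prime_three.dvd_of_dvd_pow h) (by decide), by decide, fun V ↦ by ring⟩
    have hr : rfun p = 2 := by simp [rfun, hp2, hp3]
    refine ⟨0, 3 * 2 ^ f₂, 2 * 3 ^ f₃, by omega, fun h ↦ ?_, fun h ↦ ?_, fun V ↦ by ring⟩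
    · rcases hpZ.dvd_mul.1 h with h | h
      · exact hp3 (heq Nat.prime_three (by exact_mod_cast h))
      · exact hp2 (heq Nat.prime_two (by exact_mod_cast hpZ.dvd_of_dvd_pow h))
    · rcases hpZ.dvd_mul.1 h with h | h
      · exact hp2 (heq Nat.prime_two (by exact_mod_cast h))
      · exact hp3 (heq Nat.prime_three (by exact_mod_cast hpZ.dvd_of_dvd_pow h))
  refine hE (expE_prime_pow_eq_zero hp i.succ_pos hit fun V hV hdvd ↦ ?_)
  rw [hfac, pow_succ, mul_dvd_mul_iff_left (pow_ne_zero _ hpZ.ne_zero)] at hdvd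
  exact hpZ.not_dvd_mul_mul_sub_mul hα hβ hV hcd hdvd

theorem expEff_pow_mul_pow_mul {p : ℕ} (hp : p.Prime) {s t : ℕ} (hst : s < t) (f₂ f₃ : ℕ)
    (c d : ℤ) :
    expEff f₂ f₃ ((p : ℤ) ^ s * c) ((p : ℤ) ^ s * d) (p ^ t) =
      (p : ℂ) ^ s * expEff f₂ f₃ c d (p ^ (t - s)) := by
  simp only [expEff, mul_left_comm _ ((p : ℤ) ^ s)]
  exact expE_pow_mul_pow_mul hp hst _ _

theorem expEff_eq_pow_mul_expEff_div {p : ℕ} (hp : p.Prime) {s t : ℕ} (hst : s < t)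
    (f₂ f₃ : ℕ) {c d : ℤ} (hc : (p : ℤ) ^ s ∣ c) (hd : (p : ℤ) ^ s ∣ d) :
    expEff f₂ f₃ c d (p ^ t) =
      (p : ℂ) ^ s * expEff f₂ f₃ (c / (p : ℤ) ^ s) (d / (p : ℤ) ^ s) (p ^ (t - s)) := by
  obtain ⟨c, rfl⟩ := hc
  obtain ⟨d, rfl⟩ := hd
  have hps : (p : ℤ) ^ s ≠ 0 := pow_ne_zero _ (Int.natCast_ne_zero.2 hp.ne_zero)
  rw [Int.mul_ediv_cancel_left _ hps, Int.mul_ediv_cancel_left _ hps]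
  exact expEff_pow_mul_pow_mul hp hst f₂ f₃ c d

theorem pow_dvd_iff_pow_dvd_of_expEff_ne_zero {p : ℕ} (hp : p.Prime) {t f₂ f₃ : ℕ}
    (h₂ : p = 2 → f₂ = 1) (h₃ : p = 3 → f₃ = 1) {c d : ℤ}
    (hE : expEff f₂ f₃ c d (p ^ t) ≠ 0) {i : ℕ} (hi : i + rfun p ≤ t + 1) :
    (p : ℤ) ^ i ∣ c ↔ (p : ℤ) ^ i ∣ d := by
  have hr := two_le_rfun p
  induction i with
  | zero => simp
  | succ i ih =>
    by_cases hc : (p : ℤ) ^ i ∣ c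
    · obtain ⟨d, rfl⟩ := (ih (by omega)).1 hc
      obtain ⟨c, rfl⟩ := hc
      rw [expEff_pow_mul_pow_mul hp (by omega)] at hE
      simpa [pow_succ, mul_dvd_mul_iff_left, hp.ne_zero] using
        dvd_iff_dvd_of_expEff_ne_zero hp (t := t - i) (by omega) h₂ h₃ (right_ne_zero_of_mul hE)
    · have hd := mt (ih (by omega)).2 hc
      exact iff_of_false (mt ((pow_dvd_pow _ i.le_succ).trans) hc)
        (mt ((pow_dvd_pow _ i.le_succ).trans) hd)

theorem Int.gcd_prime_pow_eq_pow {p : ℕ} (hp : p.Prime) {s t : ℕ} (hst : s ≤ t) {c : ℤ}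
    (hs : (p : ℤ) ^ s ∣ c) (hs' : ¬ (p : ℤ) ^ (s + 1) ∣ c) : Int.gcd c ((p : ℤ) ^ t) = p ^ s := by
  rw [← Int.natCast_pow, Int.natCast_dvd] at hs hs'
  rw [Int.gcd_eq_natAbs, ← Int.natCast_pow, Int.natAbs_natCast]
  obtain ⟨k, -, hk⟩ := (Nat.dvd_prime_pow hp).1 (Nat.gcd_dvd_right c.natAbs (p ^ t))
  have hsk : p ^ s ∣ p ^ k := hk ▸ Nat.dvd_gcd hs (pow_dvd_pow p hst)
  have hkc : p ^ k ∣ c.natAbs := hk ▸ Nat.gcd_dvd_left c.natAbs (p ^ t)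
  have hks : k ≤ s := by
    by_contra! h
    exact hs' ((pow_dvd_pow p h).trans hkc)
  rw [hk, le_antisymm hks ((Nat.pow_dvd_pow_iff_le_right hp.one_lt).1 hsk)]

theorem exists_pow_dvd_not_pow_succ_dvd_of_pow_dvd_iff {p : ℕ} (hp : p.Prime) {m : ℕ}
    {c d : ℤ} (hiff : ∀ i ≤ m, (p : ℤ) ^ i ∣ c ↔ (p : ℤ) ^ i ∣ d)
    (hc : ¬ (p : ℤ) ^ (m + 1) ∣ c) (hd : ¬ (p : ℤ) ^ (m + 1) ∣ d) :
    ∃ s ≤ m, (p : ℤ) ^ s ∣ c ∧ ¬ (p : ℤ) ^ (s + 1) ∣ c ∧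
      (p : ℤ) ^ s ∣ d ∧ ¬ (p : ℤ) ^ (s + 1) ∣ d := by
  have : Fact p.Prime := ⟨hp⟩
  obtain ⟨hc0, hs⟩ : c ≠ 0 ∧ padicValInt p c < m + 1 := by simpa [padicValInt_dvd_iff] using hc
  have hsc : (p : ℤ) ^ padicValInt p c ∣ c := padicValInt_dvd c
  have hsc' : ¬ (p : ℤ) ^ (padicValInt p c + 1) ∣ c := by simp [padicValInt_dvd_iff, hc0]
  refine ⟨_, Nat.lt_succ_iff.1 hs, hsc, hsc', (hiff _ (Nat.lt_succ_iff.1 hs)).1 hsc, ?_⟩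
  rcases Nat.lt_succ_iff_lt_or_eq.1 hs with hs | hs
  · exact mt (hiff _ hs).2 hsc'
  · rwa [hs]

theorem stmt12 (p : ℕ) (hp : p.Prime) (t : ℕ) (ht : rfun p ≤ t)
    (f₂ f₃ : ℕ) (hf₂ : f₂ ≤ 1) (hf₃ : f₃ ≤ 1)
    (hw₂ : w2 (p ^ t) ≤ f₂) (hw₃ : w3 (p ^ t) ≤ f₃) (c d : ℤ) :
    (¬ (p : ℤ) ^ (t - rfun p + 2) ∣ c → ¬ (p : ℤ) ^ (t - rfun p + 2) ∣ d →
      expEff f₂ f₃ c d (p ^ t) ≠ 0 →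
      ∃ s : ℕ, Int.gcd c ((p : ℤ) ^ t) = p ^ s ∧ Int.gcd d ((p : ℤ) ^ t) = p ^ s ∧
        expEff f₂ f₃ c d (p ^ t) =
          (p : ℂ) ^ s * expEff f₂ f₃ (c / (p : ℤ) ^ s) (d / (p : ℤ) ^ s) (p ^ (t - s))) ∧
    (((p : ℤ) ^ (t - rfun p + 2) ∣ c ∨ (p : ℤ) ^ (t - rfun p + 2) ∣ d) →
      expEff f₂ f₃ c d (p ^ t) ≠ 0 →
      (p : ℤ) ^ (t - rfun p + 1) ∣ c ∧ (p : ℤ) ^ (t - rfun p + 1) ∣ d ∧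
        expEff f₂ f₃ c d (p ^ t) =
          (p : ℂ) ^ (t - rfun p + 1) *
            expEff f₂ f₃ (c / (p : ℤ) ^ (t - rfun p + 1)) (d / (p : ℤ) ^ (t - rfun p + 1))
              (p ^ (rfun p - 1))) := by
  have hr := two_le_rfun p
  have h₂ : p = 2 → f₂ = 1 := by
    rintro rfl
    have : w2 (2 ^ t) = 1 := if_pos (pow_dvd_pow 2 (hr.trans ht))
    omega
  have h₃ : p = 3 → f₃ = 1 := by
    rintro rfl
    have : w3 (3 ^ t) = 1 := if_pos (pow_dvd_pow 3 (hr.trans ht))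
    omega
  have hiff (hE : expEff f₂ f₃ c d (p ^ t) ≠ 0) (i : ℕ) (hi : i ≤ t - rfun p + 1) :=
    pow_dvd_iff_pow_dvd_of_expEff_ne_zero hp h₂ h₃ hE (i := i) (by omega)
  refine ⟨fun hc hd hE ↦ ?_, fun hcd hE ↦ ?_⟩
  · obtain ⟨s, hs, hsc, hsc', hsd, hsd'⟩ :=
      exists_pow_dvd_not_pow_succ_dvd_of_pow_dvd_iff hp (hiff hE) hc hd
    exact ⟨s, Int.gcd_prime_pow_eq_pow hp (by omega) hsc hsc',
      Int.gcd_prime_pow_eq_pow hp (by omega) hsd hsd',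
      expEff_eq_pow_mul_expEff_div hp (by omega) f₂ f₃ hsc hsd⟩
  · have hm {x : ℤ} (h : (p : ℤ) ^ (t - rfun p + 2) ∣ x) : (p : ℤ) ^ (t - rfun p + 1) ∣ x :=
      (pow_dvd_pow _ (Nat.le_succ _)).trans h
    obtain ⟨hc, hd⟩ : (p : ℤ) ^ (t - rfun p + 1) ∣ c ∧ (p : ℤ) ^ (t - rfun p + 1) ∣ d := by
      rcases hcd with h | h
      · exact ⟨hm h, (hiff hE _ le_rfl).1 (hm h)⟩
      · exact ⟨(hiff hE _ le_rfl).2 (hm h), hm h⟩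
    refine ⟨hc, hd, ?_⟩
    rw [expEff_eq_pow_mul_expEff_div hp (by omega) f₂ f₃ hc hd,
      show t - (t - rfun p + 1) = rfun p - 1 by omega]
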